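/- arXiv:2207.04601 — 2 statements merged into one kernel-verified Lean document; each statement's English description precedes it below -/
import Mathlib

section
/- Let X, Y, Z be independent random variables, each exponentially distributed with rate 1, and let γ_R, γ_D, γ_E > 0 and R > 0 be real numbers. Then the probability that min( log₂((1 + γ_R·X)/(1 + γ_E·Z)), log₂(1 + γ_D·Y) ) < R (equivalently, the probability of the event { (1 + γ_R·X)/(1 + γ_E·Z) < 2^R or 1 + γ_D·Y < 2^R }) equals 1 − exp(−(2^R − 1)/γ_D − (2^R − 1)/γ_R) · (1 + (2^R/γ_R)·γ_E)^{−1}. (Secrecy outage probability of Case II, where only the source-to-relay link is wiretapped.) -/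
/-!
The complement of the outage event is `{Y ≥ y₀} ∩ {X ≥ x₀ + k Z}` with `y₀ = (2^R - 1)/γD`,
`x₀ = (2^R - 1)/γR`, `k = 2^R γE/γR` (the second description is valid where `Z ≥ 0`, i.e. almost
surely). The two events involve disjoint coordinates, so their probabilities multiply.
The first is the tail `e^{-y₀}`; conditioning the second on `Z` gives `E[e^{-(x₀ + k Z)}]`,
which the Laplace transform of `Exp(1)` evaluates to `e^{-x₀}/(1 + k)`.
-/

open MeasureTheory ProbabilityTheory Real Set

namespace ProbabilityTheory

instance (r : ℝ) : SFinite (expMeasure r) := by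
  unfold expMeasure gammaMeasure
  infer_instance

instance (r : ℝ) : NullSingletonClass (expMeasure r) :=
  ⟨fun x ↦ withDensity_absolutelyContinuous _ _ (measure_singleton x)⟩

lemma expMeasure_Iio_zero (r : ℝ) : expMeasure r (Iio 0) = 0 := by
  rw [expMeasure, gammaMeasure, withDensity_apply _ measurableSet_Iio]
  exact lintegral_exponentialPDF_of_nonpos le_rfl

lemma ae_nonneg_expMeasure (r : ℝ) : ∀ᵐ x ∂expMeasure r, 0 ≤ x := by
  rw [ae_iff]
  simp only [not_le]
  exact expMeasure_Iio_zero r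

lemma expMeasure_Ici {r c : ℝ} (hr : 0 < r) (hc : 0 ≤ c) :
    expMeasure r (Ici c) = ENNReal.ofReal (exp (-(r * c))) := by
  have := isProbabilityMeasure_expMeasure hr
  have hexp : exp (-(r * c)) ≤ 1 := exp_le_one_iff.2 (by nlinarith)
  rw [← measure_congr Ioi_ae_eq_Ici, ← compl_Iic, prob_compl_eq_one_sub measurableSet_Iic,
    ← ofReal_cdf, cdf_expMeasure_eq hr, if_pos hc, ← ENNReal.ofReal_one,
    ← ENNReal.ofReal_sub _ (by linarith), sub_sub_cancel]

lemma lintegral_exp_neg_mul_expMeasure {r t : ℝ} (hr : 0 < r) (ht : 0 ≤ t) :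
    ∫⁻ x, ENNReal.ofReal (exp (-(t * x))) ∂expMeasure r = ENNReal.ofReal (r / (r + t)) := by
  have hdensity : ∀ x, exponentialPDF r x * ENNReal.ofReal (exp (-(t * x)))
      = (Ici 0).indicator (fun x ↦ ENNReal.ofReal (r * exp (-(r + t) * x))) x := by
    intro x
    rcases lt_or_ge x 0 with hx | hx
    · simp [exponentialPDF_of_neg hx, hx]
    · rw [exponentialPDF_of_nonneg hx, indicator_of_mem (mem_Ici.2 hx),
        ← ENNReal.ofReal_mul (by positivity), mul_assoc, ← exp_add]
      ring_nf
  have hint : IntegrableOn (fun x ↦ r * exp (-(r + t) * x)) (Ici 0) := by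
    rw [integrableOn_Ici_iff_integrableOn_Ioi]
    exact (exp_neg_integrableOn_Ioi 0 (by positivity : 0 < r + t)).const_mul r
  have hmeas : Measurable (exponentialPDF r) := (measurable_exponentialPDFReal r).ennreal_ofReal
  change ∫⁻ x, _ ∂volume.withDensity (exponentialPDF r) = _
  rw [lintegral_withDensity_eq_lintegral_mul _ hmeas (by fun_prop)]
  simp only [Pi.mul_apply, hdensity]
  rw [lintegral_indicator measurableSet_Ici,
    ← ofReal_integral_eq_lintegral_ofReal hint (ae_of_all _ fun x ↦ by positivity),
    integral_Ici_eq_integral_Ioi, integral_const_mul, integral_exp_mul_Ioi (by linarith) 0,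
    mul_zero, exp_zero, neg_div_neg_eq, mul_one_div]

lemma expMeasure_prod_setOf_add_mul_le {r s c k : ℝ} (hr : 0 < r) (hs : 0 < s) (hc : 0 ≤ c)
    (hk : 0 ≤ k) :
    ((expMeasure r).prod (expMeasure s)) {q | c + k * q.2 ≤ q.1}
      = ENNReal.ofReal (exp (-(r * c)) * (s / (s + r * k))) := by
  rw [Measure.prod_apply_symm (measurableSet_le (by fun_prop) (by fun_prop))]
  calc ∫⁻ z, expMeasure r ((fun x ↦ (x, z)) ⁻¹' {q | c + k * q.2 ≤ q.1}) ∂expMeasure s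
      = ∫⁻ z, ENNReal.ofReal (exp (-(r * c))) * ENNReal.ofReal (exp (-(r * k * z)))
          ∂expMeasure s := by
        refine lintegral_congr_ae ((ae_nonneg_expMeasure s).mono fun z hz ↦ ?_)
        dsimp only
        rw [← ENNReal.ofReal_mul (exp_nonneg _), ← exp_add,
          show -(r * c) + -(r * k * z) = -(r * (c + k * z)) by ring,
          ← expMeasure_Ici hr (by positivity)]
        rfl
    _ = _ := by
        rw [lintegral_const_mul _ (by fun_prop), lintegral_exp_neg_mul_expMeasure hs (by positivity),
          ← ENNReal.ofReal_mul (exp_nonneg _)]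

end ProbabilityTheory

namespace MeasureTheory.Measure

variable {α β γ : Type*} [MeasurableSpace α] [MeasurableSpace β] [MeasurableSpace γ]

lemma measurableSet_setOf_mem_and_mem {s : Set β} {t : Set (α × γ)} (hs : MeasurableSet s)
    (ht : MeasurableSet t) : MeasurableSet {p : α × β × γ | p.2.1 ∈ s ∧ (p.1, p.2.2) ∈ t} :=
  (measurable_snd.fst hs).inter ((measurable_fst.prodMk measurable_snd.snd) ht)

lemma prod_prod_setOf_mem_and_mem (μ : Measure α) (ν : Measure β) (ρ : Measure γ) [SFinite ν]
    [SFinite ρ] {s : Set β} {t : Set (α × γ)} (hs : MeasurableSet s) (ht : MeasurableSet t) :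
    (μ.prod (ν.prod ρ)) {p | p.2.1 ∈ s ∧ (p.1, p.2.2) ∈ t} = ν s * (μ.prod ρ) t := by
  rw [prod_apply (measurableSet_setOf_mem_and_mem hs ht), prod_apply ht,
    ← lintegral_const_mul _ (measurable_measure_prodMk_left ht)]
  congr 1 with x
  exact prod_prod s (Prod.mk x ⁻¹' t)

end MeasureTheory.Measure

lemma le_div_one_add_mul_iff {a b c x z : ℝ} (hb : 0 < b) (hc : 0 ≤ c) (hz : 0 ≤ z) :
    a ≤ (1 + b * x) / (1 + c * z) ↔ (a - 1) / b + a * c / b * z ≤ x := by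
  rw [le_div_iff₀ (by positivity), show (a - 1) / b + a * c / b * z = (a * (1 + c * z) - 1) / b by
    field_simp; ring, div_le_iff₀ hb]
  constructor <;> intro h <;> linarith

/-- Secrecy outage probability of Case II (only the source-to-relay link is wiretapped):
`X, Y, Z` are independent unit-rate exponential random variables, modeled as the three
coordinates of the product of three unit-rate exponential measures. -/
theorem case2_SOP (γR γD γE R : ℝ) (hγR : 0 < γR) (hγD : 0 < γD) (hγE : 0 < γE)
    (hR : 0 < R) :
    ((expMeasure 1).prod ((expMeasure 1).prod (expMeasure 1)))
      {p : ℝ × ℝ × ℝ |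
        (1 + γR * p.1) / (1 + γE * p.2.2) < (2 : ℝ) ^ R ∨ 1 + γD * p.2.1 < (2 : ℝ) ^ R}
      = ENNReal.ofReal
        (1 - Real.exp (-((2 : ℝ) ^ R - 1) / γD - ((2 : ℝ) ^ R - 1) / γR) *
          (1 + ((2 : ℝ) ^ R / γR) * γE)⁻¹) := by
  have := isProbabilityMeasure_expMeasure one_pos
  set a := (2 : ℝ) ^ R
  have ha : 1 < a := one_lt_rpow (by norm_num) hR
  set t : Set (ℝ × ℝ) := {q | a ≤ (1 + γR * q.1) / (1 + γE * q.2)}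
  have ht : MeasurableSet t := measurableSet_le measurable_const (by fun_prop)
  have hcompl : {p : ℝ × ℝ × ℝ | (1 + γR * p.1) / (1 + γE * p.2.2) < a ∨ 1 + γD * p.2.1 < a}
      = {p | p.2.1 ∈ Ici ((a - 1) / γD) ∧ (p.1, p.2.2) ∈ t}ᶜ := by
    ext p
    simp only [t, mem_compl_iff, mem_ofPred_eq, mem_Ici, not_and_or, not_le, lt_div_iff₀ hγD]
    exact Or.comm.trans (or_congr_left (by constructor <;> intro h <;> linarith))
  have ht_ae : t =ᵐ[(expMeasure 1).prod (expMeasure 1)]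
      {q | (a - 1) / γR + a * γE / γR * q.2 ≤ q.1} := by
    refine Filter.eventuallyEq_set.2 ?_
    filter_upwards [Measure.quasiMeasurePreserving_snd.ae (ae_nonneg_expMeasure 1)] with q hq
    exact le_div_one_add_mul_iff hγR hγE.le hq
  rw [hcompl, prob_compl_eq_one_sub (Measure.measurableSet_setOf_mem_and_mem measurableSet_Ici ht),
    Measure.prod_prod_setOf_mem_and_mem _ _ _ measurableSet_Ici ht, measure_congr ht_ae,
    expMeasure_Ici one_pos (by positivity),
    expMeasure_prod_setOf_add_mul_le one_pos one_pos (by positivity) (by positivity),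
    ← ENNReal.ofReal_mul (exp_nonneg _), ← ENNReal.ofReal_one,
    ← ENNReal.ofReal_sub _ (by positivity)]
  congr 2
  rw [show -(a - 1) / γD - (a - 1) / γR = -(1 * ((a - 1) / γD)) + -(1 * ((a - 1) / γR)) by ring,
    exp_add]
  ring
end

section
/- Fix real numbers γ_E > 0, α > 0, and R > 0. Then lim_{γ_D → ∞} γ_D · 𝒫₂(α·γ_D, γ_D, γ_E, R) = (2^R − 1)·(1 + 1/α) + 2^R·γ_E/α. In particular, with γ_R = α·γ_D and γ_E fixed, the Case II secrecy outage probability satisfies 𝒫₂ ≈ 𝓜₂·γ_D^{−1} with 𝓜₂ = (2^R − 1)(1 + 1/α) + 2^R·γ_E/α > 0 as γ_D → ∞, so the secrecy diversity order is 1. -/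
/-! With `γ_R = α γ_D`, the quantity `γ_D · 𝒫₂` is `x · g (1/x)` at `x = γ_D`, where
`g t = 1 - exp (-a t) / (1 + b t)` with `a = (2^R - 1)(1 + 1/α)` and `b = 2^R γ_E / α`.
Since `g 0 = 0`, this is a difference quotient of `g` at `0`, so its limit is `g' 0 = a + b`. -/

open Filter Real

/-- Case II closed-form secrecy outage probability. -/
noncomputable def P2 (γR γD γE R : ℝ) : ℝ :=
  1 - Real.exp (-((2 : ℝ) ^ R - 1) / γD - ((2 : ℝ) ^ R - 1) / γR) *
    (1 + ((2 : ℝ) ^ R / γR) * γE)⁻¹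

open scoped Topology

theorem HasDerivAt.tendsto_smul_comp_inv_atTop {F : Type*} [NormedAddCommGroup F]
    [NormedSpace ℝ F] {f : ℝ → F} {f' : F} (hf : HasDerivAt f f' 0) (h0 : f 0 = 0) :
    Tendsto (fun x : ℝ => x • f x⁻¹) atTop (𝓝 f') := by
  simpa [Function.comp_def, h0] using
    hf.tendsto_slope_zero_right.comp tendsto_inv_atTop_nhdsGT_zero

theorem hasDerivAt_one_sub_exp_mul_inv (a b : ℝ) :
    HasDerivAt (fun x : ℝ => 1 - exp (-(a * x)) * (1 + b * x)⁻¹) (a + b) 0 := by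
  have hexp : HasDerivAt (fun x : ℝ => exp (-(a * x))) (exp (-(a * 0)) * -a) 0 :=
    ((hasDerivAt_id (0 : ℝ)).const_mul a).neg.exp.congr_deriv (by simp)
  have hinv : HasDerivAt (fun x : ℝ => (1 + b * x)⁻¹) (-b / (1 + b * 0) ^ 2) 0 :=
    (((hasDerivAt_id (0 : ℝ)).const_mul b).const_add 1).inv (by simp) |>.congr_deriv (by simp)
  exact ((hexp.mul hinv).const_sub 1).congr_deriv (by simp [add_comm])

theorem P2_mul_eq_one_sub_exp_mul_inv (α γD γE R : ℝ) :
    P2 (α * γD) γD γE R =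
      1 - exp (-(((2 : ℝ) ^ R - 1) * (1 + 1 / α) * γD⁻¹)) *
        (1 + (2 : ℝ) ^ R * γE / α * γD⁻¹)⁻¹ := by
  unfold P2
  ring_nf

theorem two_rpow_sub_one_mul_add_pos {γE α R : ℝ} (hγE : 0 ≤ γE) (hα : 0 < α) (hR : 0 < R) :
    0 < ((2 : ℝ) ^ R - 1) * (1 + 1 / α) + (2 : ℝ) ^ R * γE / α := by
  have h2R : 1 < (2 : ℝ) ^ R := one_lt_rpow one_lt_two hR
  have hrate : 0 < ((2 : ℝ) ^ R - 1) * (1 + 1 / α) := by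
    apply mul_pos <;> [linarith; positivity]
  have heve : 0 ≤ (2 : ℝ) ^ R * γE / α := by positivity
  linarith

/-- Theorem 5 (Case II, first high-SNR scenario): with `γ_E` fixed and `γ_R = α·γ_D → ∞`,
`γ_D · 𝒫₂ → 𝓜₂ = (2^R − 1)(1 + 1/α) + 2^R·γ_E/α`, and `𝓜₂ > 0`
(so the secrecy diversity order is 1). -/
theorem case2_asymptotic_fixed_eve (γE α R : ℝ) (hγE : 0 < γE) (hα : 0 < α) (hR : 0 < R) :
    Tendsto (fun γD : ℝ => γD * P2 (α * γD) γD γE R) atTop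
      (nhds (((2 : ℝ) ^ R - 1) * (1 + 1 / α) + (2 : ℝ) ^ R * γE / α)) ∧
    0 < ((2 : ℝ) ^ R - 1) * (1 + 1 / α) + (2 : ℝ) ^ R * γE / α := by
  refine ⟨?_, two_rpow_sub_one_mul_add_pos hγE.le hα hR⟩
  simpa only [P2_mul_eq_one_sub_exp_mul_inv, smul_eq_mul] using
    (hasDerivAt_one_sub_exp_mul_inv _ _).tendsto_smul_comp_inv_atTop (by simp)
end
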